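/- Suppose M > 8π and ρ is a smooth solution of the 2D Patlak–Keller–Segel system with mass M, finite initial second moment ∫|x|²ρ₀ dx < ∞, and maximal existence interval [0,T*). Then T* ≤ (2π / (M(M−8π))) ∫_{ℝ²} |x|² ρ₀(x) dx; in particular the solution cannot be global in time. -/

import Mathlib

open MeasureTheory Real

noncomputable section

abbrev E2 := EuclideanSpace ℝ (Fin 2)

/-! By the virial identity the second moment is an affine function of time with slope
`4M(1 - M/(8π)) < 0`, so it would become negative after time `(2π / (M(M - 8π))) ∫|x|²ρ₀`;
since it stays nonnegative, the solution cannot exist beyond that time. -/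

open Set

theorem eq_add_mul_sub_of_hasDerivAt_const {f : ℝ → ℝ} {a b c : ℝ}
    (hf : ∀ t ∈ Ico a b, HasDerivAt f c t) {t : ℝ} (ht : t ∈ Ico a b) :
    f t = f a + c * (t - a) := by
  have hsub : Icc a t ⊆ Ico a b := Icc_subset_Ico_right ht.2
  rcases ht.1.eq_or_lt with rfl | hat
  · ring
  obtain ⟨s, -, hslope⟩ := exists_hasDerivAt_eq_slope f (fun _ => c) hat
    (fun x hx => (hf x (hsub hx)).continuousAt.continuousWithinAt)
    (fun x hx => hf x (hsub (Ioo_subset_Icc_self hx)))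
  rw [eq_div_iff (sub_ne_zero.2 hat.ne')] at hslope
  linarith

theorem le_div_neg_of_hasDerivAt_const_of_nonneg {f : ℝ → ℝ} {c T : ℝ} (hc : c < 0)
    (hT : 0 < T) (hf : ∀ t ∈ Ico 0 T, HasDerivAt f c t) (hnn : ∀ t ∈ Ico 0 T, 0 ≤ f t) :
    T ≤ f 0 / -c := by
  have hbound : 0 ≤ f 0 / -c := div_nonneg (hnn 0 ⟨le_rfl, hT⟩) (neg_nonneg.2 hc.le)
  refine le_of_forall_lt_imp_le_of_dense fun t ht => ?_
  rcases lt_or_ge t 0 with ht0 | ht0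
  · linarith
  have hft := eq_add_mul_sub_of_hasDerivAt_const hf ⟨ht0, ht⟩
  rw [le_div_iff₀ (neg_pos.2 hc)]
  nlinarith [hnn t ⟨ht0, ht⟩]

theorem blowup_supercritical_PKS_general
    (ρ : ℝ → E2 → ℝ) (M Tstar : ℝ)
    (hM : 8 * π < M) (hT : 0 < Tstar)
    (hnnmom : ∀ t ∈ Set.Ico (0:ℝ) Tstar, 0 ≤ ∫ x : E2, ‖x‖ ^ 2 * ρ t x)
    (hvirial : ∀ t ∈ Set.Ico (0:ℝ) Tstar,
      HasDerivAt (fun s => ∫ x : E2, ‖x‖ ^ 2 * ρ s x)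
        (4 * M * (1 - M / (8 * π))) t) :
    Tstar ≤ 2 * π / (M * (M - 8 * π)) * ∫ x : E2, ‖x‖ ^ 2 * ρ 0 x := by
  have hM0 : 0 < M := by linarith [pi_pos]
  have hslope : 4 * M * (1 - M / (8 * π)) < 0 := by
    have : 1 - M / (8 * π) < 0 := by
      rw [sub_neg, lt_div_iff₀ (by positivity)]
      linarith
    nlinarith
  have hTstar := le_div_neg_of_hasDerivAt_const_of_nonneg hslope hT hvirial hnnmom
  have hrate : -(4 * M * (1 - M / (8 * π))) = M * (M - 8 * π) / (2 * π) := by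
    field_simp
    ring
  rw [hrate] at hTstar
  exact hTstar.trans_eq (by field_simp)

/-- Blowup for supercritical mass: if `M > 8π` then the maximal existence time
satisfies `T* ≤ (2π/(M(M−8π))) ∫|x|²ρ₀`. -/
theorem blowup_supercritical_PKS
    (ρ : ℝ → E2 → ℝ) (M Tstar : ℝ)
    (hM : 8 * π < M) (hT : 0 < Tstar)
    (hnn : ∀ t x, 0 ≤ ρ t x)
    (hmass : ∀ t ∈ Set.Ico (0:ℝ) Tstar, ∫ x : E2, ρ t x = M)
    (hmom : ∀ t ∈ Set.Ico (0:ℝ) Tstar,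
      Integrable (fun x : E2 => ‖x‖ ^ 2 * ρ t x))
    (hnnmom : ∀ t ∈ Set.Ico (0:ℝ) Tstar, 0 ≤ ∫ x : E2, ‖x‖ ^ 2 * ρ t x)
    (hvirial : ∀ t ∈ Set.Ico (0:ℝ) Tstar,
      HasDerivAt (fun s => ∫ x : E2, ‖x‖ ^ 2 * ρ s x)
        (4 * M * (1 - M / (8 * π))) t) :
    Tstar ≤ 2 * π / (M * (M - 8 * π)) * ∫ x : E2, ‖x‖ ^ 2 * ρ 0 x :=
  blowup_supercritical_PKS_general ρ M Tstar hM hT hnnmom hvirial
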